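/- Every 1-obstacle representation of K*_{5,5} is an outside obstacle representation: the obstacle is contained in the unbounded connected component of the complement in ℝ² of the union of the closed segments [v(p), v(q)] over all edges pq of K*_{5,5}. -/

import Mathlib

open Set

/-- General position: no three of the points `v p` are collinear. -/
def GenPos {V : Type*} (v : V → ℝ × ℝ) : Prop :=
  ∀ p q r : V, p ≠ q → p ≠ r → q ≠ r → ¬ Collinear ℝ ({v p, v q, v r} : Set (ℝ × ℝ))

/-- An `h`-obstacle representation of a simple graph `G`: an injective drawing
`v` of the vertices in general position, together with `h` obstacles (nonempty
compact connected sets), each obstacle avoiding every closed edge segment and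
every vertex point, such that every non-edge's open segment meets some obstacle. -/
structure ObstacleRep {V : Type*} (G : SimpleGraph V) (h : ℕ) where
  v : V → ℝ × ℝ
  inj : Function.Injective v
  genpos : GenPos v
  obs : Fin h → Set (ℝ × ℝ)
  obs_compact : ∀ i, IsCompact (obs i)
  obs_connected : ∀ i, IsConnected (obs i)
  obs_avoid_edges : ∀ i, ∀ p q : V, G.Adj p q → Disjoint (obs i) (segment ℝ (v p) (v q))
  obs_avoid_vertices : ∀ i, ∀ p : V, v p ∉ obs i
  blocks : ∀ p q : V, p ≠ q → ¬ G.Adj p q →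
    ∃ i, ((obs i) ∩ openSegment ℝ (v p) (v q)).Nonempty

/-- `K*_{m,n}`: the complete bipartite graph `K_{m,n}` minus a maximum matching.
`b i = Sum.inl i` is adjacent to `r j = Sum.inr j` iff `i ≠ j` (as naturals). -/
def KStarGraph (m n : ℕ) : SimpleGraph (Fin m ⊕ Fin n) where
  Adj x y := match x, y with
    | Sum.inl i, Sum.inr j => (i : ℕ) ≠ (j : ℕ)
    | Sum.inr j, Sum.inl i => (i : ℕ) ≠ (j : ℕ)
    | _, _ => False
  symm := by constructor; rintro (i|i) (j|j) h <;> simp_all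
  loopless := by constructor; rintro (i|i) h <;> simp_all


/-!
Let `H` be the convex hull of the drawing and `C` the obstacle. If `C ⊄ H`, a ray leaving `H`
from a point of `C` avoids all edges, so the component of `C` in the complement of the edges is
unbounded. If `C ⊆ H`, general position gives at least three vertices that are extreme points
of `H`, two of which, `P` and `Q`, lie in the same part of `K*_{n,n}`. They are non-adjacent, so
`C` meets the open segment `PQ`, and they have three pairwise non-adjacent common neighbours, two
of which, `W` and `W'`, lie on the same side of the line `PQ`. As `C` is connected and avoids the
edges `PW` and `WQ`, it stays in the union of the open half-plane beyond `PQ` and the open angle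
`PWQ`, hence strictly on the `PQ` side of the parallel to `PQ` through `W`; likewise for `W'`.
But `C` also meets the open segment `WW'`, which lies no closer to `PQ` than the nearer of `W`
and `W'`.
-/

/-- Twice the signed area of the triangle `P Q Y`. -/
def orient (P Q Y : ℝ × ℝ) : ℝ := (Q.1 - P.1) * (Y.2 - P.2) - (Q.2 - P.2) * (Y.1 - P.1)

section Orient

variable {P Q Y : ℝ × ℝ}

lemma continuous_orient (P Q : ℝ × ℝ) : Continuous (orient P Q) := by
  unfold orient; fun_prop

@[simp] lemma orient_self_left (P Y : ℝ × ℝ) : orient P P Y = 0 := by unfold orient; ring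

@[simp] lemma orient_self_middle (P Q : ℝ × ℝ) : orient P Q P = 0 := by unfold orient; ring

@[simp] lemma orient_self_right (P Q : ℝ × ℝ) : orient P Q Q = 0 := by unfold orient; ring

lemma orient_rotate (P Q Y : ℝ × ℝ) : orient Q Y P = orient P Q Y := by unfold orient; ring

lemma orient_swap (P Q Y : ℝ × ℝ) : orient Q P Y = -orient P Q Y := by unfold orient; ring

lemma orient_add_orient_add_orient (P Q W Y : ℝ × ℝ) :
    orient P Q Y + orient Q W Y + orient W P Y = orient P Q W := by
  unfold orient; ring

lemma orient_lineMap (P Q A B : ℝ × ℝ) (s : ℝ) :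
    orient P Q (AffineMap.lineMap A B s) = (1 - s) * orient P Q A + s * orient P Q B := by
  simp only [orient, AffineMap.lineMap_apply_module, Prod.fst_add, Prod.snd_add, Prod.smul_fst,
    Prod.smul_snd, smul_eq_mul]
  ring

lemma exists_lineMap_eq_of_orient_eq_zero (hPQ : P ≠ Q) (h : orient P Q Y = 0) :
    ∃ s : ℝ, AffineMap.lineMap P Q s = Y := by
  unfold orient at h
  simp only [AffineMap.lineMap_apply_module', Prod.ext_iff, Prod.fst_add, Prod.snd_add,
    Prod.smul_fst, Prod.smul_snd, Prod.fst_sub, Prod.snd_sub, smul_eq_mul]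
  rcases eq_or_ne (Q.1 - P.1) 0 with h1 | h1
  · have h2 : Q.2 - P.2 ≠ 0 := fun h2 => hPQ (Prod.ext (by linarith) (by linarith))
    refine ⟨(Y.2 - P.2) / (Q.2 - P.2), ?_, by field_simp; ring⟩
    rw [h1] at h ⊢
    have : Y.1 - P.1 = 0 := by simpa [h2] using h
    linarith
  · refine ⟨(Y.1 - P.1) / (Q.1 - P.1), by field_simp; ring, ?_⟩
    field_simp
    linear_combination -h

lemma collinear_of_orient_eq_zero (h : orient P Q Y = 0) : Collinear ℝ {P, Q, Y} := by
  rcases eq_or_ne P Q with rfl | hPQ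
  · simpa using collinear_pair ℝ P Y
  obtain ⟨s, rfl⟩ := exists_lineMap_eq_of_orient_eq_zero hPQ h
  exact collinear_triple_of_mem_affineSpan_pair (left_mem_affineSpan_pair ℝ P Q)
    (right_mem_affineSpan_pair ℝ P Q) (AffineMap.lineMap_mem_affineSpan_pair s P Q)

end Orient

section Convex

variable {E : Type*} [AddCommGroup E] [Module ℝ E]

lemma mem_openSegment_of_collinear_of_mem_extremePoints {H : Set E} {P Q y : E}
    (hP : P ∈ H.extremePoints ℝ) (hQ : Q ∈ H.extremePoints ℝ) (hPQ : P ≠ Q) (hy : y ∈ H)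
    (hyP : y ≠ P) (hyQ : y ≠ Q) (hcol : Collinear ℝ {P, Q, y}) :
    y ∈ openSegment ℝ P Q := by
  rcases hcol.wbtw_or_wbtw_or_wbtw with h | h | h
  · exact absurd (hQ.2 hP.1 hy (mem_openSegment_of_ne_left_right hPQ hyQ
      (mem_segment_iff_wbtw.2 h))) hPQ
  · exact mem_openSegment_of_ne_left_right hyP.symm hyQ.symm (mem_segment_iff_wbtw.2 h.symm)
  · exact absurd (hP.2 hy hQ.1 (mem_openSegment_of_ne_left_right hyP hPQ.symm
      (mem_segment_iff_wbtw.2 h))) hyP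

lemma Convex.add_smul_sub_notMem {K : Set E} {m z : E} (hK : Convex ℝ K) (hm : m ∈ K)
    (hz : z ∉ K) {t : ℝ} (ht : 0 ≤ t) : z + t • (z - m) ∉ K := by
  intro h
  apply hz
  have h1t : (0 : ℝ) < 1 + t := by linarith
  convert hK h hm (inv_pos.2 h1t).le (div_nonneg ht h1t.le) (by field_simp) using 1
  match_scalars <;> field_simp; ring

end Convex

section NormedSpace

variable {E : Type*} [NormedAddCommGroup E] [NormedSpace ℝ E]

lemma IsCompact.subset_affineSpan_extremePoints [FiniteDimensional ℝ E] {s : Set E}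
    (hs : IsCompact s) (hconv : Convex ℝ s) : s ⊆ affineSpan ℝ (s.extremePoints ℝ) :=
  calc s = closure (convexHull ℝ (s.extremePoints ℝ)) :=
        (closure_convexHull_extremePoints hs hconv).symm
    _ ⊆ affineSpan ℝ (s.extremePoints ℝ) :=
        closure_minimal (convexHull_subset_affineSpan _)
          (AffineSubspace.closed_of_finiteDimensional _)

lemma not_isBounded_image_Ici_add_smul (z : E) {u : E} (hu : u ≠ 0) :
    ¬ Bornology.IsBounded ((fun t : ℝ => z + t • u) '' Ici 0) := by
  intro hb
  obtain ⟨R, hR⟩ := isBounded_iff_forall_norm_le.1 hb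
  have hu' : 0 < ‖u‖ := norm_pos_iff.2 hu
  set t := (R + ‖z‖ + 1) / ‖u‖
  have hz : ‖z‖ ≤ R := hR z ⟨0, mem_Ici.2 le_rfl, by simp⟩
  have ht : 0 ≤ t := div_nonneg (by linarith [norm_nonneg z]) hu'.le
  have hnorm : ‖t • u‖ ≤ ‖z + t • u‖ + ‖z‖ := by
    simpa using norm_sub_le (z + t • u) z
  rw [norm_smul, Real.norm_of_nonneg ht, div_mul_cancel₀ _ hu'.ne'] at hnorm
  linarith [hR _ ⟨t, ht, rfl⟩]

lemma not_isBounded_connectedComponentIn_compl {K S C : Set E} {x : E} (hK : Convex ℝ K)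
    (hKne : K.Nonempty) (hSK : S ⊆ K) (hC : IsPreconnected C) (hCS : Disjoint C S)
    (hx : x ∈ C) (hCK : ¬ C ⊆ K) :
    ¬ Bornology.IsBounded (connectedComponentIn Sᶜ x) := by
  obtain ⟨z, hzC, hzK⟩ := not_subset.1 hCK
  obtain ⟨m, hm⟩ := hKne
  set ray := (fun t : ℝ => z + t • (z - m)) '' Ici 0
  have hray : ray ⊆ Sᶜ := by
    rintro _ ⟨t, ht, rfl⟩ hS
    exact hK.add_smul_sub_notMem hm hzK ht (hSK hS)
  have hzray : z ∈ ray := ⟨0, mem_Ici.2 le_rfl, by simp⟩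
  have hsub : C ∪ ray ⊆ connectedComponentIn Sᶜ x :=
    (hC.union z hzC hzray (isPreconnected_Ici.image _ (by fun_prop))).subset_connectedComponentIn
      (Or.inl hx) (union_subset hCS.subset_compl_right hray)
  have hzm : z - m ≠ 0 := sub_ne_zero.2 (ne_of_mem_of_not_mem hm hzK).symm
  exact fun hb =>
    not_isBounded_image_Ici_add_smul z hzm (hb.subset (subset_union_right.trans hsub))

end NormedSpace

section Separation

variable {H C : Set (ℝ × ℝ)} {P Q W W' A B X c : ℝ × ℝ}

lemma orient_pos_of_mem_openSegment (hD : 0 < orient A B X) (hc : c ∈ openSegment ℝ A B) :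
    0 < orient B X c ∧ 0 < orient X A c := by
  rw [openSegment_eq_image_lineMap] at hc
  obtain ⟨s, ⟨hs0, hs1⟩, rfl⟩ := hc
  rw [orient_lineMap, orient_lineMap, orient_rotate A B X, ← orient_rotate X A B]
  simp only [orient_self_middle, orient_self_right]
  constructor <;> nlinarith

lemma mem_segment_of_orient_eq_zero (hD : 0 < orient A B X) (h0 : orient A B c = 0)
    (hB : 0 ≤ orient B X c) (hA : 0 ≤ orient X A c) : c ∈ segment ℝ A B := by
  have hAB : A ≠ B := by rintro rfl; simp at hD
  obtain ⟨s, rfl⟩ := exists_lineMap_eq_of_orient_eq_zero hAB h0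
  rw [orient_lineMap, orient_rotate A B X] at hB
  rw [orient_lineMap, ← orient_rotate X A B] at hA
  simp only [orient_self_middle, orient_self_right] at hA hB
  rw [segment_eq_image_lineMap]
  exact ⟨s, ⟨by nlinarith, by nlinarith⟩, rfl⟩

lemma orient_pos_of_notMem_segment (hW : 0 < orient P Q W) (hc : 0 < orient P Q c)
    (hWP : 0 ≤ orient W P c) (hQW : 0 ≤ orient Q W c) (hcPW : c ∉ segment ℝ P W)
    (hcWQ : c ∉ segment ℝ W Q) : 0 < orient W P c ∧ 0 < orient Q W c := by
  refine ⟨hWP.lt_of_ne fun e => hcPW ?_, hQW.lt_of_ne fun e => hcWQ ?_⟩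
  · rw [segment_symm]
    exact mem_segment_of_orient_eq_zero (by rwa [← orient_rotate W P Q]) e.symm hc.le hQW
  · rw [segment_symm]
    exact mem_segment_of_orient_eq_zero (by rwa [orient_rotate]) e.symm hWP hc.le

lemma orient_lt_of_isPreconnected (hC : IsPreconnected C) (hCH : C ⊆ H)
    (hP : P ∈ H.extremePoints ℝ) (hQ : Q ∈ H.extremePoints ℝ) (hW : 0 < orient P Q W)
    (hPW : Disjoint C (segment ℝ P W)) (hWQ : Disjoint C (segment ℝ W Q))
    (hPQ : (C ∩ openSegment ℝ P Q).Nonempty) : ∀ c ∈ C, orient P Q c < orient P Q W := by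
  set U := {y | orient P Q y < 0} ∪ {y | 0 < orient W P y ∧ 0 < orient Q W y}
  set V := {y | 0 < orient P Q y} ∩ {y | orient W P y < 0 ∨ orient Q W y < 0}
  have hU : IsOpen U := (isOpen_lt (continuous_orient P Q) continuous_const).union
    ((isOpen_lt continuous_const (continuous_orient W P)).inter
      (isOpen_lt continuous_const (continuous_orient Q W)))
  have hV : IsOpen V := (isOpen_lt continuous_const (continuous_orient P Q)).inter
    ((isOpen_lt (continuous_orient W P) continuous_const).union
      (isOpen_lt (continuous_orient Q W) continuous_const))
  have hUV : Disjoint U V := by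
    rw [Set.disjoint_left]
    rintro y (hy | ⟨hy1, hy2⟩) ⟨hy, hy' | hy'⟩ <;>
      simp only [mem_ofPred_eq] at * <;> linarith
  have hsegU : openSegment ℝ P Q ⊆ U := fun y hy =>
    Or.inr (orient_pos_of_mem_openSegment hW hy).symm
  have hcover : C ⊆ U ∪ V := by
    intro c hc
    rcases lt_trichotomy (orient P Q c) 0 with h | h | h
    · exact Or.inl (Or.inl h)
    · have hcP : c ≠ P := fun e => hPW.ne_of_mem hc (left_mem_segment ℝ P W) e
      have hcQ : c ≠ Q := fun e => hWQ.ne_of_mem hc (right_mem_segment ℝ W Q) e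
      have hPQ' : P ≠ Q := by rintro rfl; simp at hW
      exact Or.inl (hsegU (mem_openSegment_of_collinear_of_mem_extremePoints hP hQ hPQ'
        (hCH hc) hcP hcQ (collinear_of_orient_eq_zero h)))
    · by_cases hneg : orient W P c < 0 ∨ orient Q W c < 0
      · exact Or.inr ⟨h, hneg⟩
      push Not at hneg
      exact Or.inl (Or.inr (orient_pos_of_notMem_segment hW h hneg.1 hneg.2
        (disjoint_left.1 hPW hc) (disjoint_left.1 hWQ hc)))
  obtain ⟨z, hzC, hz⟩ := hPQ
  have hCU : C ⊆ U := hC.subset_left_of_subset_union hU hV hUV hcover ⟨z, hzC, hsegU hz⟩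
  intro c hc
  rcases hCU hc with h | ⟨h1, h2⟩
  · exact h.trans hW
  · linarith [orient_add_orient_add_orient P Q W c]

lemma disjoint_openSegment_of_orient_pos (hC : IsPreconnected C) (hCH : C ⊆ H)
    (hP : P ∈ H.extremePoints ℝ) (hQ : Q ∈ H.extremePoints ℝ)
    (hPQ : (C ∩ openSegment ℝ P Q).Nonempty)
    (hW : 0 < orient P Q W) (hPW : Disjoint C (segment ℝ P W))
    (hWQ : Disjoint C (segment ℝ W Q)) (hW' : 0 < orient P Q W')
    (hPW' : Disjoint C (segment ℝ P W'))
    (hW'Q : Disjoint C (segment ℝ W' Q)) : Disjoint C (openSegment ℝ W W') := by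
  rw [Set.disjoint_left, openSegment_eq_image_lineMap]
  rintro _ hz ⟨s, ⟨hs0, hs1⟩, rfl⟩
  have h := orient_lt_of_isPreconnected hC hCH hP hQ hW hPW hWQ hPQ _ hz
  have h' := orient_lt_of_isPreconnected hC hCH hP hQ hW' hPW' hW'Q hPQ _ hz
  rw [orient_lineMap] at h h'
  nlinarith

lemma exists_disjoint_openSegment {ι : Type*} [Fintype ι] (hι : 2 < Fintype.card ι)
    {W : ι → ℝ × ℝ} (hC : IsPreconnected C) (hCH : C ⊆ H)
    (hP : P ∈ H.extremePoints ℝ) (hQ : Q ∈ H.extremePoints ℝ)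
    (hPQ : (C ∩ openSegment ℝ P Q).Nonempty) (hW : ∀ i, orient P Q (W i) ≠ 0)
    (hPW : ∀ i, Disjoint C (segment ℝ P (W i)))
    (hWQ : ∀ i, Disjoint C (segment ℝ (W i) Q)) :
    ∃ i j, i ≠ j ∧ Disjoint C (openSegment ℝ (W i) (W j)) := by
  obtain ⟨i, j, hij, hsign⟩ := Fintype.exists_ne_map_eq_of_card_lt
    (fun i => decide (0 < orient P Q (W i))) (by simpa using hι)
  refine ⟨i, j, hij, ?_⟩
  by_cases hi : 0 < orient P Q (W i)
  · have hj : 0 < orient P Q (W j) := by simpa [hi] using hsign.symm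
    exact disjoint_openSegment_of_orient_pos hC hCH hP hQ hPQ hi (hPW i) (hWQ i) hj (hPW j)
      (hWQ j)
  · have hj : ¬ 0 < orient P Q (W j) := by simpa [hi] using hsign.symm
    have hneg : ∀ k, ¬ 0 < orient P Q (W k) → 0 < orient Q P (W k) := fun k hk => by
      rw [orient_swap]; exact neg_pos.2 ((not_lt.1 hk).lt_of_ne (hW k))
    simp only [segment_symm ℝ _ Q, segment_symm ℝ P] at hPW hWQ
    exact disjoint_openSegment_of_orient_pos hC hCH hQ hP (by rwa [openSegment_symm]) (hneg i hi)
      (hWQ i) (hPW i) (hneg j hj) (hWQ j) (hPW j)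

end Separation

lemma Set.exists_subset_pair_of_encard_le_two {α : Type*} [Nonempty α] {s : Set α}
    (hs : s.encard ≤ 2) : ∃ a b, s ⊆ {a, b} := by
  obtain rfl | ⟨a, ha⟩ := s.eq_empty_or_nonempty
  · exact ⟨Classical.arbitrary α, Classical.arbitrary α, empty_subset _⟩
  have h1 : (s \ {a}).encard ≤ 1 := by
    rw [← encard_sdiff_singleton_add_one ha] at hs
    exact (ENat.add_le_add_iff_right ENat.one_ne_top).1 hs
  obtain h | ⟨b, hb⟩ := encard_le_one_iff_eq.1 h1
  · exact ⟨a, a, fun y hy => by by_cases e : y = a <;> simp_all [sdiff_eq_empty]⟩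
  · refine ⟨a, b, fun y hy => ?_⟩
    by_cases e : y = a
    · simp [e]
    · have : y ∈ s \ {a} := ⟨hy, e⟩
      simp_all

def extremeVertices {V : Type*} (v : V → ℝ × ℝ) : Set V :=
  {p | v p ∈ (convexHull ℝ (range v)).extremePoints ℝ}

lemma GenPos.two_lt_encard_extremeVertices {V : Type*} [Finite V] {v : V → ℝ × ℝ}
    (hv : GenPos v) {a b c : V} (hab : a ≠ b) (hac : a ≠ c) (hbc : b ≠ c) :
    2 < (extremeVertices v).encard := by
  by_contra! h
  have : Nonempty V := ⟨a⟩
  obtain ⟨p, q, hpq⟩ := exists_subset_pair_of_encard_le_two h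
  have hext : (convexHull ℝ (range v)).extremePoints ℝ ⊆ {v p, v q} := by
    intro y hy
    obtain ⟨r, rfl⟩ := extremePoints_convexHull_subset hy
    rcases hpq hy with rfl | rfl <;> simp
  have hline : convexHull ℝ (range v) ⊆ line[ℝ, v p, v q] :=
    (IsCompact.subset_affineSpan_extremePoints (s := convexHull ℝ (range v))
      ((finite_range v).isCompact_convexHull (𝕜 := ℝ)) (convex_convexHull ℝ _)).trans
      (affineSpan_mono ℝ hext)
  have hmem : ∀ r, v r ∈ line[ℝ, v p, v q] := fun r =>
    hline (subset_convexHull ℝ _ ⟨r, rfl⟩)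
  exact hv a b c hab hac hbc (collinear_triple_of_mem_affineSpan_pair (hmem a) (hmem b) (hmem c))

namespace ObstacleRep

variable {V : Type*} {G : SimpleGraph V} {h : ℕ}

def edgeUnion (rep : ObstacleRep G h) : Set (ℝ × ℝ) :=
  ⋃ (p : V) (q : V) (_ : G.Adj p q), segment ℝ (rep.v p) (rep.v q)

lemma edgeUnion_subset_convexHull (rep : ObstacleRep G h) :
    rep.edgeUnion ⊆ convexHull ℝ (range rep.v) := by
  simp only [edgeUnion, iUnion_subset_iff]
  exact fun p q _ => (convex_convexHull ℝ _).segment_subset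
    (subset_convexHull ℝ _ ⟨p, rfl⟩) (subset_convexHull ℝ _ ⟨q, rfl⟩)

lemma disjoint_edgeUnion (rep : ObstacleRep G h) (i : Fin h) :
    Disjoint (rep.obs i) rep.edgeUnion := by
  simp only [edgeUnion, disjoint_iUnion_right]
  exact rep.obs_avoid_edges i

lemma not_isBounded_connectedComponentIn [Nonempty V] (rep : ObstacleRep G h) {i : Fin h}
    {x : ℝ × ℝ} (hx : x ∈ rep.obs i) (hout : ¬ rep.obs i ⊆ convexHull ℝ (range rep.v)) :
    ¬ Bornology.IsBounded (connectedComponentIn rep.edgeUnionᶜ x) :=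
  not_isBounded_connectedComponentIn_compl (convex_convexHull ℝ _)
    ((range_nonempty rep.v).mono (subset_convexHull ℝ _)) rep.edgeUnion_subset_convexHull
    (rep.obs_connected i).isPreconnected (rep.disjoint_edgeUnion i) hx hout

lemma inter_openSegment_nonempty (rep : ObstacleRep G 1) {p q : V} (hpq : p ≠ q)
    (hnadj : ¬ G.Adj p q) : (rep.obs 0 ∩ openSegment ℝ (rep.v p) (rep.v q)).Nonempty := by
  obtain ⟨i, hi⟩ := rep.blocks p q hpq hnadj
  rwa [Subsingleton.elim i 0] at hi

lemma not_subset_convexHull (rep : ObstacleRep G 1) {ι : Type*} [Fintype ι]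
    (hι : 2 < Fintype.card ι) {p q : V} {w : ι → V} (hw : Function.Injective w) (hpq : p ≠ q)
    (hnpq : ¬ G.Adj p q) (hp : p ∈ extremeVertices rep.v) (hq : q ∈ extremeVertices rep.v)
    (hpw : ∀ i, G.Adj p (w i)) (hwq : ∀ i, G.Adj (w i) q)
    (hww : ∀ i j, ¬ G.Adj (w i) (w j)) :
    ¬ rep.obs 0 ⊆ convexHull ℝ (range rep.v) := by
  intro hCH
  have horient : ∀ i, orient (rep.v p) (rep.v q) (rep.v (w i)) ≠ 0 := fun i h =>
    rep.genpos p q (w i) hpq (G.ne_of_adj (hpw i)) (G.ne_of_adj (hwq i)).symm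
      (collinear_of_orient_eq_zero h)
  obtain ⟨i, j, hij, hdisj⟩ :=
    exists_disjoint_openSegment hι (rep.obs_connected 0).isPreconnected hCH hp hq
      (rep.inter_openSegment_nonempty hpq hnpq) horient
      (fun i => rep.obs_avoid_edges 0 _ _ (hpw i)) (fun i => rep.obs_avoid_edges 0 _ _ (hwq i))
  exact (rep.inter_openSegment_nonempty (hw.ne hij) (hww i j)).ne_empty hdisj.inter_eq

end ObstacleRep

namespace KStarGraph

lemma two_lt_card_ne_ne {n : ℕ} (hn : 5 ≤ n) (a b : Fin n) :
    2 < Fintype.card {c : Fin n // c ≠ a ∧ c ≠ b} := by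
  rw [Fintype.card_subtype]
  have hsdiff :=
    Finset.card_le_card_sdiff_add_card (s := (Finset.univ : Finset (Fin n))) (t := {a, b})
  have hpair : ({a, b} : Finset (Fin n)).card ≤ 2 := Finset.card_le_two
  have e : Finset.univ \ {a, b} = Finset.univ.filter (fun c : Fin n => c ≠ a ∧ c ≠ b) := by
    ext c; simp
  rw [Finset.card_univ, Fintype.card_fin, e] at hsdiff
  omega

lemma not_subset_convexHull {n : ℕ} (hn : 5 ≤ n) (rep : ObstacleRep (KStarGraph n n) 1) :
    ¬ rep.obs 0 ⊆ convexHull ℝ (range rep.v) := by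
  have hlt : (univ : Set Bool).encard < (extremeVertices rep.v).encard := by
    simpa [encard_pair] using rep.genpos.two_lt_encard_extremeVertices
      (a := .inl ⟨0, by omega⟩) (b := .inl ⟨1, by omega⟩) (c := .inl ⟨2, by omega⟩)
      (by simp) (by simp) (by simp)
  obtain ⟨p, hp, q, hq, hpq, hside⟩ :=
    exists_ne_map_eq_of_encard_lt_of_maps_to hlt (mapsTo_univ Sum.isLeft _)
  rcases p with a | a <;> rcases q with b | b <;>
    simp only [Sum.isLeft_inl, Sum.isLeft_inr, reduceCtorEq] at hside
  · exact rep.not_subset_convexHull (two_lt_card_ne_ne hn a b) (w := fun c => Sum.inr c.1)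
      (Sum.inr_injective.comp Subtype.val_injective) hpq (fun h => h) hp hq
      (fun c => Fin.val_injective.ne c.2.1.symm) (fun c => Fin.val_injective.ne c.2.2.symm)
      (fun _ _ h => h)
  · exact rep.not_subset_convexHull (two_lt_card_ne_ne hn a b) (w := fun c => Sum.inl c.1)
      (Sum.inl_injective.comp Subtype.val_injective) hpq (fun h => h) hp hq
      (fun c => Fin.val_injective.ne c.2.1) (fun c => Fin.val_injective.ne c.2.2)
      (fun _ _ h => h)

theorem obstacle_is_outside {n : ℕ} (hn : 5 ≤ n) (rep : ObstacleRep (KStarGraph n n) 1) :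
    ∀ i : Fin 1, ∀ x ∈ rep.obs i,
      x ∈ rep.edgeUnionᶜ ∧
        ¬ Bornology.IsBounded (connectedComponentIn rep.edgeUnionᶜ x) := by
  have : Nonempty (Fin n ⊕ Fin n) := ⟨Sum.inl ⟨0, by omega⟩⟩
  intro i x hx
  obtain rfl := Subsingleton.elim i 0
  exact ⟨(rep.disjoint_edgeUnion 0).subset_compl_right hx,
    rep.not_isBounded_connectedComponentIn hx (not_subset_convexHull hn rep)⟩

end KStarGraph

/-- every 1-obstacle representation of `K*_{5,5}` is an outside
obstacle representation: each point of the obstacle lies in the complement of the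
union of the closed edge segments and its connected component there is unbounded. -/
theorem kstar55_obstacle_is_outside (rep : ObstacleRep (KStarGraph 5 5) 1) :
    ∀ i : Fin 1, ∀ x ∈ rep.obs i,
      x ∈ (⋃ (p : Fin 5 ⊕ Fin 5) (q : Fin 5 ⊕ Fin 5) (_ : (KStarGraph 5 5).Adj p q),
            segment ℝ (rep.v p) (rep.v q))ᶜ ∧
      ¬ Bornology.IsBounded (connectedComponentIn
          (⋃ (p : Fin 5 ⊕ Fin 5) (q : Fin 5 ⊕ Fin 5) (_ : (KStarGraph 5 5).Adj p q),
            segment ℝ (rep.v p) (rep.v q))ᶜ x) :=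
  KStarGraph.obstacle_is_outside le_rfl rep
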